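/- Let T be a finite tree with edge set E and let v be a vertex with exactly one incoming edge e_1 and outgoing edge e_2, and let T\v be the tree obtained by deleting v and merging e_1, e_2 into a single edge e. Then the assignment q_e ↦ q_{e_1} + q_{e_2} and q_f ↦ q_f for f ≠ e defines a unital *-homomorphism σ_v*: D(T\v) → D(T) between the associated noncommutative dendrex algebras. -/

import Mathlib

/-- A finite directed (multi)graph. -/
structure DiGraph where
  V : Type
  E : Type
  src : E → V
  tgt : E → V

namespace DiGraph

/-- A directed path, as a list of edges `e₁ ⋯ eₙ` with `s(eᵢ) = r(eᵢ₊₁)`. -/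
def IsPath (G : DiGraph) (l : List G.E) : Prop :=
  l.Chain' fun a b => G.src a = G.tgt b

/-- A set of edges lies on a common directed path. -/
def OnCommonPath (G : DiGraph) (S : Set G.E) : Prop :=
  ∃ l : List G.E, G.IsPath l ∧ S ⊆ {e | e ∈ l}

/-- Adjacency in the underlying undirected graph. -/
def Adj (G : DiGraph) (a b : G.V) : Prop :=
  ∃ e, (G.src e = a ∧ G.tgt e = b) ∨ (G.src e = b ∧ G.tgt e = a)

/-- The underlying undirected graph is connected. -/
def Connected (G : DiGraph) : Prop := ∀ a b, Relation.ReflTransGen G.Adj a b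

/-- A finite tree: connected with exactly one more vertex than edges
(equivalently, connected and acyclic). -/
def IsTree (G : DiGraph) [Fintype G.V] [Fintype G.E] : Prop :=
  G.Connected ∧ Fintype.card G.E + 1 = Fintype.card G.V

/-- The defining relations of the noncommutative dendrex algebra `D(T)`: the generators
`q e` are positive, sum to `1`, and a product `q e₁ ⋯ q eₙ` vanishes whenever there is no
directed path traversing a set of edges containing `{e₁, …, eₙ}`. -/
def DendrexRel (G : DiGraph) [Fintype G.E] (A : Type) [Ring A] [PartialOrder A]
    (q : G.E → A) : Prop :=
  (∀ e, 0 ≤ q e) ∧ (∑ e, q e = 1) ∧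
    ∀ l : List G.E, ¬ G.OnCommonPath {e | e ∈ l} → (l.map q).prod = 0

/-- `(U, ι)` is the universal unital C*-algebra `D(T)` on the dendrex relations of `G`. -/
def IsUniversalDendrex (G : DiGraph) [Fintype G.E] (U : Type) [CStarAlgebra U]
    [PartialOrder U] [StarOrderedRing U] (ι : G.E → U) : Prop :=
  G.DendrexRel U ι ∧
    ∀ (A : Type) [CStarAlgebra A] [PartialOrder A] [StarOrderedRing A] (f : G.E → A),
      G.DendrexRel A f → ∃! θ : U →⋆ₐ[ℂ] A, ∀ e, θ (ι e) = f e

/-- The tree `T\v` obtained by deleting the vertex `v`, whose unique incoming edge is `e₁`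
and whose unique outgoing edge is `e₂`, and merging `e₁`, `e₂` into a single new edge
(represented by the `Sum.inr` summand) running from the source of `e₁` to the target of
`e₂`. -/
def delVertex (G : DiGraph) (v : G.V) (e₁ e₂ : G.E) (hne : e₁ ≠ e₂)
    (h₁ : ∀ f, G.tgt f = v → f = e₁) (h₂ : ∀ f, G.src f = v → f = e₂) : DiGraph where
  V := {w : G.V // w ≠ v}
  E := {f : G.E // f ≠ e₁ ∧ f ≠ e₂} ⊕ PUnit
  src := Sum.elim (fun f => ⟨G.src f.1, fun h => f.2.2 (h₂ f.1 h)⟩)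
    (fun _ => ⟨G.src e₁, fun h => hne (h₂ e₁ h)⟩)
  tgt := Sum.elim (fun f => ⟨G.tgt f.1, fun h => f.2.1 (h₁ f.1 h)⟩)
    (fun _ => ⟨G.tgt e₂, fun h => hne (h₁ e₂ h).symm⟩)

instance (G : DiGraph) [Fintype G.E] [DecidableEq G.E] (v : G.V) (e₁ e₂ : G.E)
    (hne : e₁ ≠ e₂) (h₁ : ∀ f, G.tgt f = v → f = e₁) (h₂ : ∀ f, G.src f = v → f = e₂) :
    Fintype (G.delVertex v e₁ e₂ hne h₁ h₂).E :=
  inferInstanceAs (Fintype ({f : G.E // f ≠ e₁ ∧ f ≠ e₂} ⊕ PUnit))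

end DiGraph

/-!
The map `σ_v*` is obtained from the universal property of `D(T\v)` applied to the family
`f ↦ ∑_{φ a = f} q_a`, where `φ : E(T) → E(T\v)` merges `e₁` and `e₂` into `e`. Positivity and
`∑ = 1` are immediate for such a fibrewise sum along any edge map. For the path relations,
every directed path of `T` collapses to a directed path of `T\v` (the consecutive pair `e₂ e₁`
through `v` becomes `e`), so `φ` maps edge sets on a common path to edge sets on a common path.
Expanding a product of fibrewise sums then writes it as a sum of products `q_{a₁} ⋯ q_{aₙ}`
whose edges lie on no common path of `T`, each of which vanishes in `D(T)`.
-/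

namespace DiGraph

theorem OnCommonPath.mono {G : DiGraph} {S T : Set G.E} (hST : S ⊆ T) (hT : G.OnCommonPath T) :
    G.OnCommonPath S :=
  let ⟨l, hl, hTl⟩ := hT
  ⟨l, hl, hST.trans hTl⟩

section Pushforward

variable {G H : DiGraph} [Fintype G.E] [DecidableEq H.E] {A : Type}

def pushforward [AddCommMonoid A] (φ : G.E → H.E) (q : G.E → A) (b : H.E) : A :=
  ∑ a with φ a = b, q a

/-- Generalising over a prefix `w` lets the fibre sums be expanded one letter at a time. -/
theorem mul_prod_map_pushforward_eq_zero [Ring A] [PartialOrder A] {q : G.E → A}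
    (hq : G.DendrexRel A q) (φ : G.E → H.E) :
    ∀ (l : List H.E) (w : List G.E),
      (∀ m : List G.E, m.map φ = l → ¬ G.OnCommonPath {e | e ∈ w ++ m}) →
        (w.map q).prod * (l.map (pushforward φ q)).prod = 0
  | [], w, h => by simpa using hq.2.2 w (by simpa using h [] rfl)
  | b :: l, w, h => by
    rw [List.map_cons, List.prod_cons, pushforward, Finset.sum_mul, Finset.mul_sum]
    refine Finset.sum_eq_zero fun a ha => ?_
    have hab : φ a = b := by simpa using ha
    rw [← mul_assoc, ← List.prod_concat, ← List.map_concat]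
    refine mul_prod_map_pushforward_eq_zero hq φ l (w.concat a) fun m hm => ?_
    simpa [hab, hm] using h (a :: m)

theorem DendrexRel.pushforward [Ring A] [PartialOrder A] [IsOrderedAddMonoid A]
    [Fintype H.E] {q : G.E → A} (hq : G.DendrexRel A q) {φ : G.E → H.E}
    (hφ : ∀ S, G.OnCommonPath S → H.OnCommonPath (φ '' S)) :
    H.DendrexRel A (pushforward φ q) := by
  refine ⟨fun b => Finset.sum_nonneg fun a _ => hq.1 a, ?_, fun l hl => ?_⟩
  · exact (Finset.sum_fiberwise Finset.univ φ q).trans hq.2.1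
  · simpa using mul_prod_map_pushforward_eq_zero hq φ l [] fun m hm hpath =>
      hl <| (hφ _ (by simpa using hpath)).mono fun b hb => by
        obtain ⟨a, ha, rfl⟩ := List.mem_map.1 (hm ▸ hb)
        exact ⟨a, ha, rfl⟩

end Pushforward

section MergeEdges

variable (G : DiGraph) [DecidableEq G.E] (v : G.V) (e₁ e₂ : G.E) (hne : e₁ ≠ e₂)
  (h₁ : ∀ f, G.tgt f = v → f = e₁) (h₂ : ∀ f, G.src f = v → f = e₂)

local notation "T'" => G.delVertex v e₁ e₂ hne h₁ h₂

def mergeEdge (a : G.E) : (T').E :=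
  if h : a = e₁ ∨ a = e₂ then Sum.inr PUnit.unit else Sum.inl ⟨a, not_or.mp h⟩

local notation "φ" => mergeEdge G v e₁ e₂ hne h₁ h₂

variable {G v e₁ e₂ hne h₁ h₂}

theorem mergeEdge_eq_inr {a : G.E} (h : a = e₁ ∨ a = e₂) : φ a = Sum.inr PUnit.unit :=
  dif_pos h

theorem mergeEdge_eq_inl {a : G.E} (h : ¬(a = e₁ ∨ a = e₂)) :
    φ a = Sum.inl ⟨a, not_or.mp h⟩ :=
  dif_neg h

theorem mergeEdge_right_eq_left : φ e₂ = φ e₁ :=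
  (mergeEdge_eq_inr (Or.inr rfl)).trans (mergeEdge_eq_inr (Or.inl rfl)).symm

theorem mergeEdge_eq_inr_iff {a : G.E} : φ a = Sum.inr PUnit.unit ↔ a = e₁ ∨ a = e₂ := by
  by_cases h : a = e₁ ∨ a = e₂
  · exact iff_of_true (mergeEdge_eq_inr h) h
  · exact iff_of_false (mergeEdge_eq_inl h ▸ Sum.inl_ne_inr) h

theorem mergeEdge_eq_inl_iff {a : G.E} {f : {f : G.E // f ≠ e₁ ∧ f ≠ e₂}} :
    φ a = Sum.inl f ↔ a = f.1 := by
  by_cases h : a = e₁ ∨ a = e₂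
  · refine iff_of_false (mergeEdge_eq_inr h ▸ Sum.inr_ne_inl) ?_
    rintro rfl
    exact h.elim f.2.1 f.2.2
  · rw [mergeEdge_eq_inl h]
    exact Sum.inl_injective.eq_iff.trans Subtype.ext_iff

theorem src_mergeEdge {a : G.E} (ha : a ≠ e₂) : ((T').src (φ a)).1 = G.src a := by
  by_cases h : a = e₁
  · rw [mergeEdge_eq_inr (Or.inl h), h]
    rfl
  · rw [mergeEdge_eq_inl (not_or.mpr ⟨h, ha⟩)]
    rfl

theorem tgt_mergeEdge {a : G.E} (ha : a ≠ e₁) : ((T').tgt (φ a)).1 = G.tgt a := by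
  by_cases h : a = e₂
  · rw [mergeEdge_eq_inr (Or.inr h), h]
    rfl
  · rw [mergeEdge_eq_inl (not_or.mpr ⟨ha, h⟩)]
    rfl

variable (G v e₁ e₂ hne h₁ h₂) in
/-- The image of a path of `T` in `T\v`: the passage `e₂ e₁` through `v` becomes one letter. -/
def collapse : List G.E → List (T').E
  | a :: b :: t => if a = e₂ ∧ b = e₁ then φ a :: collapse t else φ a :: collapse (b :: t)
  | l => l.map φ

theorem collapse_cons (a : G.E) (t : List G.E) :
    ∃ r, collapse G v e₁ e₂ hne h₁ h₂ (a :: t) = φ a :: r := by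
  match t with
  | [] => exact ⟨[], rfl⟩
  | b :: t =>
    rw [collapse]
    split_ifs
    exacts [⟨_, rfl⟩, ⟨_, rfl⟩]

theorem mergeEdge_mem_collapse {a : G.E} :
    ∀ {p : List G.E}, a ∈ p → φ a ∈ collapse G v e₁ e₂ hne h₁ h₂ p
  | [b], ha => by
    rw [List.mem_singleton.1 ha]
    exact List.mem_singleton_self _
  | b :: c :: t, ha => by
    rw [collapse]
    split_ifs with hbc
    · obtain rfl | rfl | ha := List.mem_cons.1 ha |>.imp_right List.mem_cons.1
      · exact List.mem_cons_self
      · rw [hbc.1, hbc.2, ← mergeEdge_right_eq_left]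
        exact List.mem_cons_self
      · exact List.mem_cons_of_mem _ (mergeEdge_mem_collapse ha)
    · obtain rfl | ha := List.mem_cons.1 ha
      · exact List.mem_cons_self
      · exact List.mem_cons_of_mem _ (mergeEdge_mem_collapse ha)

theorem isPath_collapse (hin : G.tgt e₁ = v) (hout : G.src e₂ = v) :
    ∀ {p : List G.E}, G.IsPath p → (T').IsPath (collapse G v e₁ e₂ hne h₁ h₂ p)
  | [], _ => List.isChain_nil
  | [_], _ => List.isChain_singleton _
  | a :: b :: t, hp => by
    obtain ⟨hab, hbt⟩ := List.isChain_cons_cons.1 hp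
    rw [collapse]
    split_ifs with hc
    · obtain ⟨ha, hb⟩ := hc
      subst a b
      cases t with
      | nil => exact List.isChain_singleton _
      | cons c t =>
        obtain ⟨hbc, hct⟩ := List.isChain_cons_cons.1 hbt
        have hc₁ : c ≠ e₁ := fun h => hne (h₂ e₁ (by rw [hbc, h, hin]))
        obtain ⟨r, hr⟩ := collapse_cons c t
        have ih := isPath_collapse hin hout hct
        rw [hr] at ih ⊢
        refine List.isChain_cons_cons.2 ⟨Subtype.ext ?_, ih⟩
        rw [mergeEdge_right_eq_left, src_mergeEdge hne, tgt_mergeEdge hc₁, hbc]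
    · have hb₁ : b ≠ e₁ := fun h => hc ⟨h₂ a (by rw [hab, h, hin]), h⟩
      have ha₂ : a ≠ e₂ := fun h => hb₁ (h₁ b (by rw [← hab, h, hout]))
      obtain ⟨r, hr⟩ := collapse_cons b t
      have ih := isPath_collapse hin hout hbt
      rw [hr] at ih ⊢
      refine List.isChain_cons_cons.2 ⟨Subtype.ext ?_, ih⟩
      rw [src_mergeEdge ha₂, tgt_mergeEdge hb₁, hab]

theorem onCommonPath_image_mergeEdge (hin : G.tgt e₁ = v) (hout : G.src e₂ = v) {S : Set G.E}
    (hS : G.OnCommonPath S) : (T').OnCommonPath (φ '' S) :=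
  let ⟨p, hp, hSp⟩ := hS
  ⟨collapse G v e₁ e₂ hne h₁ h₂ p, isPath_collapse hin hout hp,
    Set.image_subset_iff.2 fun _ ha => mergeEdge_mem_collapse (hSp ha)⟩

variable [Fintype G.E] [DecidableEq (G.delVertex v e₁ e₂ hne h₁ h₂).E] {A : Type}
  [AddCommMonoid A] (q : G.E → A)

theorem pushforward_mergeEdge_inr : pushforward φ q (Sum.inr PUnit.unit) = q e₁ + q e₂ := by
  refine (Finset.sum_congr (Finset.ext fun a => ?_) fun _ _ => rfl).trans (Finset.sum_pair hne)
  simp [mergeEdge_eq_inr_iff]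

theorem pushforward_mergeEdge_inl (f : {f : G.E // f ≠ e₁ ∧ f ≠ e₂}) :
    pushforward φ q (Sum.inl f) = q f.1 := by
  refine (Finset.sum_congr (Finset.ext fun a => ?_) fun _ _ => rfl).trans
    (Finset.sum_singleton q f.1)
  simp [mergeEdge_eq_inl_iff]

end MergeEdges

end DiGraph

theorem stmt19_general (G : DiGraph) [Fintype G.E] [DecidableEq G.E]
    (v : G.V) (e₁ e₂ : G.E) (hne : e₁ ≠ e₂)
    (hin : G.tgt e₁ = v) (hout : G.src e₂ = v)
    (h₁ : ∀ f, G.tgt f = v → f = e₁) (h₂ : ∀ f, G.src f = v → f = e₂)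
    (U : Type) [CStarAlgebra U] [PartialOrder U] [StarOrderedRing U]
    (ι : G.E → U) (hU : G.IsUniversalDendrex U ι)
    (U' : Type) [CStarAlgebra U'] [PartialOrder U'] [StarOrderedRing U']
    (ι' : (G.delVertex v e₁ e₂ hne h₁ h₂).E → U')
    (hU' : (G.delVertex v e₁ e₂ hne h₁ h₂).IsUniversalDendrex U' ι') :
    ∃ θ : U' →⋆ₐ[ℂ] U,
      θ (ι' (Sum.inr PUnit.unit)) = ι e₁ + ι e₂ ∧
      ∀ f : {f : G.E // f ≠ e₁ ∧ f ≠ e₂}, θ (ι' (Sum.inl f)) = ι f.1 := by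
  classical
  have hrel := hU.1.pushforward (φ := DiGraph.mergeEdge G v e₁ e₂ hne h₁ h₂)
    fun _ => DiGraph.onCommonPath_image_mergeEdge hin hout
  obtain ⟨θ, hθ, -⟩ := hU'.2 U _ hrel
  refine ⟨θ, ?_, fun f => ?_⟩
  · exact (hθ _).trans (DiGraph.pushforward_mergeEdge_inr ι)
  · exact (hθ _).trans (DiGraph.pushforward_mergeEdge_inl ι f)

/-- Let `T` be a finite tree with a vertex `v` having exactly one incoming
edge `e₁` and exactly one outgoing edge `e₂`, and let `T\v` be the tree obtained by deleting
`v` and merging `e₁`, `e₂` into a single edge `e`.  Then the assignment `q e ↦ q e₁ + q e₂`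
and `q f ↦ q f` for `f ≠ e` defines a unital ∗-homomorphism `σ_v^* : D(T\v) → D(T)` of the
associated noncommutative dendrex algebras. -/
theorem stmt19 (G : DiGraph) [Fintype G.V] [Fintype G.E] [DecidableEq G.E]
    (htree : G.IsTree) (v : G.V) (e₁ e₂ : G.E) (hne : e₁ ≠ e₂)
    (hin : G.tgt e₁ = v) (hout : G.src e₂ = v)
    (h₁ : ∀ f, G.tgt f = v → f = e₁) (h₂ : ∀ f, G.src f = v → f = e₂)
    (U : Type) [CStarAlgebra U] [PartialOrder U] [StarOrderedRing U]
    (ι : G.E → U) (hU : G.IsUniversalDendrex U ι)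
    (U' : Type) [CStarAlgebra U'] [PartialOrder U'] [StarOrderedRing U']
    (ι' : (G.delVertex v e₁ e₂ hne h₁ h₂).E → U')
    (hU' : (G.delVertex v e₁ e₂ hne h₁ h₂).IsUniversalDendrex U' ι') :
    ∃ θ : U' →⋆ₐ[ℂ] U,
      θ (ι' (Sum.inr PUnit.unit)) = ι e₁ + ι e₂ ∧
      ∀ f : {f : G.E // f ≠ e₁ ∧ f ≠ e₂}, θ (ι' (Sum.inl f)) = ι f.1 :=
  stmt19_general G v e₁ e₂ hne hin hout h₁ h₂ U ι hU U' ι' hU'
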